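/- Let W be the lazy random walk on a finite simple connected regular graph G = (V,E) with #V ≥ 2, and let s ∈ ℕ with s ≥ t_mix + 1. If A_1, A_2 ⊂ ℕ are finite intervals with min(A_1) ≥ s and min(A_2) − max(A_1) ≥ s, then for every starting vertex ρ: P_ρ(R^W(A_1) ∩ R^W(A_2) ≠ ∅) ≤ 4·#A_1·#A_2 / #V, where R^W(A) = {W(n) : n ∈ A} is the range of the walk on the time set A. -/

import Mathlib

open Finset

variable {V : Type*} [Fintype V] [DecidableEq V] [Nonempty V]

/-- One-step transition kernel of the lazy random walk on `G`:
stay put with probability `1/2`, otherwise move to a uniformly chosen neighbour. -/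
noncomputable def lazyStep (G : SimpleGraph V) [DecidableRel G.Adj] (x y : V) : ℝ :=
  if x = y then 1 / 2 else if G.Adj x y then 1 / (2 * (G.degree x : ℝ)) else 0

/-- `n`-step transition probabilities of the lazy random walk. -/
noncomputable def lazyProb (G : SimpleGraph V) [DecidableRel G.Adj] : ℕ → V → V → ℝ
  | 0, x, y => if x = y then 1 else 0
  | n + 1, x, y => ∑ z : V, lazyStep G x z * lazyProb G n z y

/-- The stationary (degree-biased) distribution `π(x) = deg(x)/(2#E)`. -/
noncomputable def statDist (G : SimpleGraph V) [DecidableRel G.Adj] (x : V) : ℝ :=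
  (G.degree x : ℝ) / (2 * (G.edgeFinset.card : ℝ))

/-- The uniform `(ℓ∞, 1/4)` mixing time. -/
noncomputable def tmix (G : SimpleGraph V) [DecidableRel G.Adj] : ℕ :=
  sInf {n : ℕ | ∀ x y : V, |lazyProb G n x y / statDist G y - 1| ≤ 1 / 4}

/-- Extension of a finite path to all of `ℕ` (constant after time `N`). -/
def extPath (N : ℕ) (γ : Fin (N + 1) → V) : ℕ → V :=
  fun n => γ ⟨min n N, Nat.lt_succ_of_le (min_le_right n N)⟩

/-- Weight of a finite path under the lazy random walk kernel. -/
noncomputable def pathWeight (G : SimpleGraph V) [DecidableRel G.Adj]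
    (N : ℕ) (γ : Fin (N + 1) → V) : ℝ :=
  ∏ i ∈ Finset.range N, lazyStep G (extPath N γ i) (extPath N γ (i + 1))

open Classical in
/-- Probability, for the lazy random walk started at `ρ`, of a path event
depending only on the first `N+1` coordinates. -/
noncomputable def walkProb (G : SimpleGraph V) [DecidableRel G.Adj]
    (ρ : V) (N : ℕ) (E : (ℕ → V) → Prop) : ℝ :=
  ∑ γ : Fin (N + 1) → V,
    if extPath N γ 0 = ρ ∧ E (extPath N γ) then pathWeight G N γ else 0

open Classical in
/-- Expectation, for the lazy random walk started at `ρ`, of a path functional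
depending only on the first `N+1` coordinates. -/
noncomputable def walkExp (G : SimpleGraph V) [DecidableRel G.Adj]
    (ρ : V) (N : ℕ) (f : (ℕ → V) → ℝ) : ℝ :=
  ∑ γ : Fin (N + 1) → V,
    if extPath N γ 0 = ρ then pathWeight G N γ * f (extPath N γ) else 0

open Classical in
/-- Probability of a path event for the lazy random walk started from `π`. -/
noncomputable def walkProbStat (G : SimpleGraph V) [DecidableRel G.Adj]
    (N : ℕ) (E : (ℕ → V) → Prop) : ℝ :=
  ∑ γ : Fin (N + 1) → V,
    if E (extPath N γ) then statDist G (extPath N γ 0) * pathWeight G N γ else 0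

/-- Expectation of a path functional for the lazy random walk started from `π`. -/
noncomputable def walkExpStat (G : SimpleGraph V) [DecidableRel G.Adj]
    (N : ℕ) (f : (ℕ → V) → ℝ) : ℝ :=
  ∑ γ : Fin (N + 1) → V,
    statDist G (extPath N γ 0) * pathWeight G N γ * f (extPath N γ)

open Classical in
/-- Probability of a joint event for two independent lazy random walks,
each started from the stationary distribution. -/
noncomputable def twoWalkProbStat (G : SimpleGraph V) [DecidableRel G.Adj]
    (N : ℕ) (E : (ℕ → V) → (ℕ → V) → Prop) : ℝ :=
  ∑ γ₁ : Fin (N + 1) → V, ∑ γ₂ : Fin (N + 1) → V,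
    if E (extPath N γ₁) (extPath N γ₂) then
      (statDist G (extPath N γ₁ 0) * pathWeight G N γ₁) *
      (statDist G (extPath N γ₂ 0) * pathWeight G N γ₂) else 0

open Classical in
/-- Probability of a joint event for two independent lazy random walks,
both started at the vertex `ρ`. -/
noncomputable def twoWalkProbFrom (G : SimpleGraph V) [DecidableRel G.Adj]
    (ρ : V) (N : ℕ) (E : (ℕ → V) → (ℕ → V) → Prop) : ℝ :=
  ∑ γ₁ : Fin (N + 1) → V, ∑ γ₂ : Fin (N + 1) → V,
    if extPath N γ₁ 0 = ρ ∧ extPath N γ₂ 0 = ρ ∧ E (extPath N γ₁) (extPath N γ₂) then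
      pathWeight G N γ₁ * pathWeight G N γ₂ else 0

/-- Range of a path over a finite set of times. -/
def walkRange (w : ℕ → V) (A : Finset ℕ) : Finset V := A.image w

/-- `q̄^G(s)`: averaged intersection probability of two independent lazy walks
started at the same (uniform) vertex. -/
noncomputable def qbar (G : SimpleGraph V) [DecidableRel G.Adj] (s : ℕ) : ℝ :=
  (1 / (Fintype.card V : ℝ)) * ∑ ρ : V,
    twoWalkProbFrom G ρ s (fun w₁ w₂ =>
      (walkRange w₁ (Finset.Icc 0 s) ∩ walkRange w₂ (Finset.Icc 1 s)).Nonempty)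

/-- `H^W_ρ(m) = Σ_{i=0}^m Σ_{j=0}^m P_ρ(W(i+j)=ρ)`. -/
noncomputable def HW (G : SimpleGraph V) [DecidableRel G.Adj] (ρ : V) (m : ℕ) : ℝ :=
  ∑ i ∈ Finset.range (m + 1), ∑ j ∈ Finset.range (m + 1), lazyProb G (i + j) ρ ρ


/-! A collision of the two ranges means `W i = W j` for some `i ∈ A₁`, `j ∈ A₂`, so a union bound
reduces the claim to `P_ρ(W i = W j) ≤ 4 / #V`. By the Markov property this probability is
`∑ x, P^i(ρ, x) P^(j-i)(x, x)`, and both `i` and `j - i` are at least `t_mix`. Every entry of `P^n`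
with `n ≥ t_mix` is at most `2 / #V`: at time `t_mix` this is the `ℓ∞` mixing bound (`π` is
uniform on a regular graph), and `max_x P^n(x, y)` does not increase with `n`.

That the set defining `t_mix` is nonempty (otherwise `sInf` returns the junk value `0`) is
Doeblin's argument: on a connected graph
every entry of the lazy `P^#V` is positive, which contracts the distance of each column of `P^n`
to the uniform value geometrically. -/

namespace SimpleGraph

section Kernel

omit [Nonempty V]

variable (G : SimpleGraph V) [DecidableRel G.Adj]

lemma lazyStep_nonneg (x y : V) : 0 ≤ lazyStep G x y := by
  unfold lazyStep; split_ifs <;> positivity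

lemma lazyStep_self (x : V) : lazyStep G x x = 1 / 2 := if_pos rfl

lemma lazyStep_pos_of_adj {x y : V} (h : G.Adj x y) : 0 < lazyStep G x y := by
  have := h.degree_pos_left
  rw [lazyStep, if_neg h.ne, if_pos h]
  positivity

variable {G}

lemma sum_lazyStep {x : V} (hx : 0 < G.degree x) : ∑ y, lazyStep G x y = 1 := by
  have hsplit : ∀ y, lazyStep G x y =
      (if x = y then 1 / 2 else 0) + if G.Adj x y then 1 / (2 * (G.degree x : ℝ)) else 0 := by
    intro y
    by_cases hxy : x = y <;> simp [lazyStep, hxy]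
  rw [Finset.sum_congr rfl fun y _ => hsplit y, Finset.sum_add_distrib, Finset.sum_ite_eq,
    ← Finset.sum_filter, Finset.sum_const, ← neighborFinset_eq_filter, card_neighborFinset_eq_degree,
    nsmul_eq_mul]
  field_simp
  norm_num

lemma lazyStep_comm {d : ℕ} (hreg : G.IsRegularOfDegree d) (x y : V) :
    lazyStep G x y = lazyStep G y x := by
  by_cases hxy : x = y
  · rw [hxy]
  · simp only [lazyStep, hxy, Ne.symm hxy, if_false, G.adj_comm x y, hreg x, hreg y]

lemma lazyProb_zero (x y : V) : lazyProb G 0 x y = if x = y then 1 else 0 := rfl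

lemma lazyProb_succ (n : ℕ) (x y : V) :
    lazyProb G (n + 1) x y = ∑ z, lazyStep G x z * lazyProb G n z y := rfl

variable (G) in
lemma lazyProb_nonneg (n : ℕ) (x y : V) : 0 ≤ lazyProb G n x y := by
  induction n generalizing x with
  | zero => rw [lazyProb_zero]; positivity
  | succ n ih =>
    exact Finset.sum_nonneg fun z _ => mul_nonneg (lazyStep_nonneg G x z) (ih z)

lemma lazyProb_add (m n : ℕ) (x y : V) :
    lazyProb G (m + n) x y = ∑ z, lazyProb G m x z * lazyProb G n z y := by
  induction m generalizing x with
  | zero => simp [lazyProb_zero, ite_mul]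
  | succ m ih =>
    simp only [Nat.succ_add, lazyProb_succ, ih, Finset.mul_sum, Finset.sum_mul, mul_assoc]
    exact Finset.sum_comm

lemma sum_lazyProb (hdeg : ∀ x, 0 < G.degree x) (n : ℕ) (x : V) :
    ∑ y, lazyProb G n x y = 1 := by
  induction n generalizing x with
  | zero => simp [lazyProb_zero]
  | succ n ih =>
    simp only [lazyProb_succ]
    rw [Finset.sum_comm]
    simp only [← Finset.mul_sum, ih, mul_one]
    exact sum_lazyStep (hdeg x)

lemma sum_lazyProb_left {d : ℕ} (hreg : G.IsRegularOfDegree d) (hdeg : ∀ x, 0 < G.degree x)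
    (n : ℕ) (y : V) : ∑ x, lazyProb G n x y = 1 := by
  induction n generalizing y with
  | zero => simp [lazyProb_zero]
  | succ n ih =>
    simp only [lazyProb_succ]
    rw [Finset.sum_comm]
    simp only [← Finset.sum_mul, lazyStep_comm hreg _ (_ : V), sum_lazyStep (hdeg _), one_mul]
    exact ih y

lemma lazyProb_le_of_forall_le (hdeg : ∀ x, 0 < G.degree x) {m : ℕ} {y : V} {B : ℝ}
    (hB : ∀ z, lazyProb G m z y ≤ B) (k : ℕ) (x : V) : lazyProb G (k + m) x y ≤ B :=
  calc lazyProb G (k + m) x y = ∑ z, lazyProb G k x z * lazyProb G m z y := lazyProb_add k m x y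
    _ ≤ ∑ z, lazyProb G k x z * B :=
      Finset.sum_le_sum fun z _ => mul_le_mul_of_nonneg_left (hB z) (lazyProb_nonneg G k x z)
    _ = B := by rw [← Finset.sum_mul, sum_lazyProb hdeg, one_mul]

lemma lazyProb_pos_of_walk {x y : V} (w : G.Walk x y) : 0 < lazyProb G w.length x y := by
  induction w with
  | nil => simp [lazyProb_zero]
  | @cons a b c hab w ih =>
    rw [Walk.length_cons, lazyProb_succ]
    exact Finset.sum_pos' (fun z _ => mul_nonneg (lazyStep_nonneg G a z) (lazyProb_nonneg G _ z c))
      ⟨b, Finset.mem_univ b, mul_pos (lazyStep_pos_of_adj G hab) ih⟩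

lemma lazyProb_pos_of_le {m n : ℕ} {x y : V} (hpos : 0 < lazyProb G m x y) (hmn : m ≤ n) :
    0 < lazyProb G n x y := by
  induction n, hmn using Nat.le_induction with
  | base => exact hpos
  | succ n _ ih =>
    rw [lazyProb_succ]
    exact Finset.sum_pos' (fun z _ => mul_nonneg (lazyStep_nonneg G x z) (lazyProb_nonneg G n z y))
      ⟨x, Finset.mem_univ x, mul_pos (by rw [lazyStep_self]; norm_num) ih⟩

lemma Connected.lazyProb_card_pos (hconn : G.Connected) (x y : V) :
    0 < lazyProb G (Fintype.card V) x y := by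
  obtain ⟨w⟩ := hconn.preconnected x y
  exact lazyProb_pos_of_le (lazyProb_pos_of_walk w.toPath.1) w.toPath.2.length_lt.le

end Kernel

section Mixing

variable {G : SimpleGraph V} [DecidableRel G.Adj] {d : ℕ}
  (hreg : G.IsRegularOfDegree d) (hdeg : ∀ x, 0 < G.degree x)
include hreg hdeg

omit [DecidableEq V] in
lemma statDist_eq (y : V) : statDist G y = 1 / Fintype.card V := by
  have hedges : (2 * #G.edgeFinset : ℝ) = Fintype.card V * d := by
    have h := G.sum_degrees_eq_twice_card_edges
    simp only [hreg.degree_eq, Finset.sum_const, Finset.card_univ, smul_eq_mul] at h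
    exact_mod_cast h.symm
  have hd : (0 : ℝ) < d := by exact_mod_cast hreg y ▸ hdeg y
  rw [statDist, hreg y, hedges]
  field_simp

/-- Doeblin's contraction. -/
lemma abs_lazyProb_sub_inv_card_le {n₀ n : ℕ} {ε D : ℝ} {y : V}
    (hε : ∀ x z, ε ≤ lazyProb G n₀ x z)
    (hD : ∀ z, |lazyProb G n z y - 1 / Fintype.card V| ≤ D) (x : V) :
    |lazyProb G (n₀ + n) x y - 1 / Fintype.card V| ≤ (1 - Fintype.card V * ε) * D := by
  have hN : (Fintype.card V : ℝ) ≠ 0 := by positivity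
  -- the rows of `P^n₀` and the columns of `P^n` sum to one
  have hexpand : lazyProb G (n₀ + n) x y - 1 / Fintype.card V =
      ∑ z, (lazyProb G n₀ x z - ε) * (lazyProb G n z y - 1 / Fintype.card V) := by
    simp only [sub_mul, mul_sub, Finset.sum_sub_distrib, ← Finset.sum_mul, ← Finset.mul_sum,
      sum_lazyProb hdeg, sum_lazyProb_left hreg hdeg, lazyProb_add, Finset.sum_const,
      Finset.card_univ, nsmul_eq_mul]
    field_simp
    ring
  calc |lazyProb G (n₀ + n) x y - 1 / Fintype.card V|
      ≤ ∑ z, (lazyProb G n₀ x z - ε) * |lazyProb G n z y - 1 / Fintype.card V| := by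
        rw [hexpand]
        refine (Finset.abs_sum_le_sum_abs _ _).trans (le_of_eq ?_)
        simp only [abs_mul, abs_of_nonneg (sub_nonneg.mpr (hε x _))]
    _ ≤ ∑ z, (lazyProb G n₀ x z - ε) * D :=
        Finset.sum_le_sum fun z _ => mul_le_mul_of_nonneg_left (hD z) (sub_nonneg.mpr (hε x z))
    _ = (1 - Fintype.card V * ε) * D := by
        rw [← Finset.sum_mul, Finset.sum_sub_distrib, sum_lazyProb hdeg, Finset.sum_const,
          Finset.card_univ, nsmul_eq_mul]

lemma abs_lazyProb_mul_sub_inv_card_le {n₀ : ℕ} {ε : ℝ} (hε : ∀ x z, ε ≤ lazyProb G n₀ x z)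
    (k : ℕ) (x y : V) :
    |lazyProb G (k * n₀) x y - 1 / Fintype.card V| ≤ (1 - Fintype.card V * ε) ^ k := by
  induction k generalizing x with
  | zero =>
    have h1 : (1 : ℝ) / Fintype.card V ≤ 1 := div_le_one_of_le₀ (by simp [Nat.one_le_iff_ne_zero])
      (by positivity)
    rw [zero_mul, lazyProb_zero, pow_zero, abs_le]
    constructor <;> split_ifs <;> linarith [(by positivity : (0 : ℝ) ≤ 1 / Fintype.card V)]
  | succ k ih =>
    rw [Nat.succ_mul, add_comm, pow_succ']
    exact abs_lazyProb_sub_inv_card_le hreg hdeg hε ih x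

omit [DecidableEq V] in
lemma abs_div_statDist_sub_one (p : ℝ) (y : V) :
    |p / statDist G y - 1| = Fintype.card V * |p - 1 / Fintype.card V| := by
  have hN : (0 : ℝ) < Fintype.card V := by positivity
  rw [statDist_eq hreg hdeg, ← abs_of_pos hN, ← abs_mul, abs_of_pos hN]
  congr 1
  field_simp

lemma Connected.tmix_spec (hconn : G.Connected) (x y : V) :
    |lazyProb G (tmix G) x y / statDist G y - 1| ≤ 1 / 4 := by
  have hN : (0 : ℝ) < Fintype.card V := by positivity
  obtain ⟨⟨x₀, z₀⟩, hmin⟩ := Finite.exists_min fun p : V × V => lazyProb G (Fintype.card V) p.1 p.2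
  set ε := lazyProb G (Fintype.card V) x₀ z₀
  have hε : 0 < ε := hconn.lazyProb_card_pos x₀ z₀
  obtain ⟨k, hk⟩ := exists_pow_lt_of_lt_one (show (0 : ℝ) < 1 / (4 * Fintype.card V) by positivity)
    (show 1 - Fintype.card V * ε < 1 by nlinarith)
  have hmem : k * Fintype.card V ∈
      {n : ℕ | ∀ x y : V, |lazyProb G n x y / statDist G y - 1| ≤ 1 / 4} := by
    intro x y
    have h := (abs_lazyProb_mul_sub_inv_card_le hreg hdeg (fun x z => hmin (x, z)) k x y).trans hk.le
    rw [abs_div_statDist_sub_one hreg hdeg, ← le_div_iff₀' hN, div_div]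
    exact h
  exact Nat.sInf_mem ⟨_, hmem⟩ x y

lemma Connected.lazyProb_le_of_tmix_le (hconn : G.Connected) {n : ℕ} (hn : tmix G ≤ n) (x y : V) :
    lazyProb G n x y ≤ 2 / Fintype.card V := by
  have hN : (0 : ℝ) < Fintype.card V := by positivity
  have htmix : ∀ z, lazyProb G (tmix G) z y ≤ 2 / Fintype.card V := by
    intro z
    have h := hconn.tmix_spec hreg hdeg z y
    rw [abs_div_statDist_sub_one hreg hdeg] at h
    have h' : Fintype.card V * (lazyProb G (tmix G) z y - 1 / Fintype.card V) ≤ 1 / 4 :=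
      (mul_le_mul_of_nonneg_left (le_abs_self _) hN.le).trans h
    rw [mul_sub, mul_one_div_cancel hN.ne'] at h'
    rw [le_div_iff₀ hN]
    linarith
  rw [← Nat.sub_add_cancel hn]
  exact lazyProb_le_of_forall_le hdeg htmix _ x

end Mixing

end SimpleGraph

section WalkMeasure

open SimpleGraph

omit [Nonempty V]

omit [Fintype V] [DecidableEq V] in
lemma extPath_cons {N : ℕ} (v : V) (γ : Fin (N + 1) → V) :
    extPath (N + 1) (Fin.cons v γ) = Stream'.cons v (extPath N γ) := by
  funext n
  cases n with
  | zero => rfl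
  | succ n =>
    simp only [extPath, Nat.add_min_add_right]
    exact Fin.cons_succ (α := fun _ => V) v γ ⟨min n N, _⟩

variable {G : SimpleGraph V} [DecidableRel G.Adj]

lemma pathWeight_nonneg {N : ℕ} (γ : Fin (N + 1) → V) : 0 ≤ pathWeight G N γ :=
  Finset.prod_nonneg fun _ _ => G.lazyStep_nonneg _ _

lemma pathWeight_cons {N : ℕ} (v : V) (γ : Fin (N + 1) → V) :
    pathWeight G (N + 1) (Fin.cons v γ) = lazyStep G v (extPath N γ 0) * pathWeight G N γ := by
  rw [pathWeight, Finset.prod_range_succ', extPath_cons, mul_comm]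
  rfl

open Classical in
lemma walkProb_succ (ρ : V) (N : ℕ) (E : (ℕ → V) → Prop) :
    walkProb G ρ (N + 1) E =
      ∑ x, lazyStep G ρ x * walkProb G x N (fun w => E (Stream'.cons ρ w)) := by
  rw [walkProb, ← (Fin.consEquiv fun _ => V).sum_comp, Fintype.sum_prod_type,
    Fintype.sum_eq_single ρ fun v hv => Finset.sum_eq_zero fun γ _ => if_neg fun h => hv h.1]
  simp only [Fin.consEquiv, Equiv.coe_fn_mk, extPath_cons, pathWeight_cons, walkProb, Finset.mul_sum,
    mul_ite, mul_zero]
  rw [Finset.sum_comm]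
  refine Finset.sum_congr rfl fun γ _ => ?_
  rw [Fintype.sum_eq_single (extPath N γ 0) fun x hx => if_neg fun h => hx h.1.symm]
  simp only [Stream'.cons, true_and]

lemma walkProb_true (hdeg : ∀ x, 0 < G.degree x) (ρ : V) (N : ℕ) :
    walkProb G ρ N (fun _ => True) = 1 := by
  induction N generalizing ρ with
  | zero =>
    rw [walkProb, Fintype.sum_eq_single (fun _ : Fin 1 => ρ)]
    · simp [extPath, pathWeight]
    · intro γ hγ
      rw [if_neg]
      exact fun h => hγ (funext fun i => (congrArg γ (Subsingleton.elim i 0)).trans h.1)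
  | succ N ih =>
    rw [walkProb_succ]
    simp only [ih, mul_one]
    exact sum_lazyStep (hdeg ρ)

open Classical in
lemma walkProb_markov {i N : ℕ} (hiN : i ≤ N) (ρ x : V) (E : (ℕ → V) → Prop) :
    walkProb G ρ N (fun w => w i = x ∧ E fun n => w (n + i)) =
      lazyProb G i ρ x * walkProb G x (N - i) E := by
  induction i generalizing ρ N with
  | zero =>
    rw [lazyProb_zero, Nat.sub_zero]
    split_ifs with hρx
    · subst hρx
      rw [one_mul]
      exact Finset.sum_congr rfl fun γ _ => by simp only [and_self_left]; rfl
    · rw [zero_mul]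
      exact Finset.sum_eq_zero fun γ _ => if_neg fun h => hρx (h.1.symm.trans h.2.1)
  | succ i ih =>
    obtain ⟨N, rfl⟩ : ∃ M, N = M + 1 := ⟨N - 1, by omega⟩
    rw [walkProb_succ, Nat.add_sub_add_right, lazyProb_succ, Finset.sum_mul]
    refine Finset.sum_congr rfl fun z _ => ?_
    rw [mul_assoc, ← ih (by omega) z]
    rfl

lemma walkProb_apply_eq (hdeg : ∀ x, 0 < G.degree x) {j N : ℕ} (hjN : j ≤ N) (ρ y : V) :
    walkProb G ρ N (fun w => w j = y) = lazyProb G j ρ y := by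
  have h := walkProb_markov (G := G) hjN ρ y fun _ => True
  rw [walkProb_true hdeg, mul_one] at h
  simpa only [and_true] using h

lemma walkProb_apply_eq_and_apply_eq (hdeg : ∀ x, 0 < G.degree x) {i j N : ℕ} (hij : i ≤ j)
    (hjN : j ≤ N) (ρ x y : V) :
    walkProb G ρ N (fun w => w i = x ∧ w j = y) = lazyProb G i ρ x * lazyProb G (j - i) x y := by
  have h := walkProb_markov (G := G) (hij.trans hjN) ρ x fun w => w (j - i) = y
  simp only [Nat.sub_add_cancel hij] at h
  rw [h, walkProb_apply_eq hdeg (by omega)]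

open Classical in
lemma walkProb_le_sum {ι : Type*} (T : Finset ι) {ρ : V} {N : ℕ} {E : (ℕ → V) → Prop}
    {F : ι → (ℕ → V) → Prop} (hcover : ∀ w, E w → ∃ p ∈ T, F p w) :
    walkProb G ρ N E ≤ ∑ p ∈ T, walkProb G ρ N (F p) := by
  unfold walkProb
  rw [Finset.sum_comm]
  refine Finset.sum_le_sum fun γ _ => ?_
  split_ifs with hE
  · obtain ⟨p, hpT, hF⟩ := hcover _ hE.2
    refine le_of_eq_of_le (if_pos ⟨hE.1, hF⟩).symm
      (Finset.single_le_sum (f := fun q => if extPath N γ 0 = ρ ∧ F q (extPath N γ)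
        then pathWeight G N γ else 0) (fun q _ => ?_) hpT)
    split_ifs <;> simp [pathWeight_nonneg]
  · exact Finset.sum_nonneg fun q _ => by split_ifs <;> simp [pathWeight_nonneg]

end WalkMeasure

omit [Fintype V] [Nonempty V] in
lemma walkRange_inter_nonempty_iff {w : ℕ → V} {A B : Finset ℕ} :
    (walkRange w A ∩ walkRange w B).Nonempty ↔ ∃ p ∈ A ×ˢ B, w p.1 = w p.2 := by
  simp only [walkRange, Finset.Nonempty, Finset.mem_inter, Finset.mem_image, Finset.mem_product,
    Prod.exists]
  constructor
  · rintro ⟨_, ⟨i, hi, rfl⟩, j, hj, hji⟩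
    exact ⟨i, j, ⟨hi, hj⟩, hji.symm⟩
  · rintro ⟨i, j, ⟨hi, hj⟩, hij⟩
    exact ⟨w i, ⟨i, hi, rfl⟩, j, hj, hij.symm⟩

section Collision

variable {G : SimpleGraph V} [DecidableRel G.Adj] {d : ℕ}

lemma walkProb_apply_eq_apply_le (hconn : G.Connected) (hreg : G.IsRegularOfDegree d)
    (hdeg : ∀ x, 0 < G.degree x) {i j N : ℕ} (hi : tmix G ≤ i) (hij : tmix G + i ≤ j)
    (hjN : j ≤ N) (ρ : V) :
    walkProb G ρ N (fun w => w i = w j) ≤ 4 / Fintype.card V := by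
  calc walkProb G ρ N (fun w => w i = w j)
      ≤ ∑ x, walkProb G ρ N (fun w => w i = x ∧ w j = x) :=
        walkProb_le_sum Finset.univ fun w h => ⟨w i, Finset.mem_univ _, rfl, h.symm⟩
    _ = ∑ x, lazyProb G i ρ x * lazyProb G (j - i) x x := by
        simp only [walkProb_apply_eq_and_apply_eq hdeg (by omega : i ≤ j) hjN]
    _ ≤ ∑ _x : V, (2 / Fintype.card V : ℝ) * (2 / Fintype.card V) :=
        Finset.sum_le_sum fun x _ => mul_le_mul (hconn.lazyProb_le_of_tmix_le hreg hdeg hi ρ x)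
          (hconn.lazyProb_le_of_tmix_le hreg hdeg (by omega) x x) (G.lazyProb_nonneg _ x x)
          (by positivity)
    _ = 4 / Fintype.card V := by
        rw [Finset.sum_const, Finset.card_univ, nsmul_eq_mul]
        field_simp
        ring

end Collision

theorem range_self_intersection_two_intervals_general
    (G : SimpleGraph V) [DecidableRel G.Adj] (hconn : G.Connected)
    (hcard : 2 ≤ Fintype.card V) (d : ℕ) (hreg : G.IsRegularOfDegree d)
    (s : ℕ) (hs : tmix G + 1 ≤ s)
    (a₁ b₁ a₂ b₂ : ℕ)
    (ha₁ : s ≤ a₁) (hsep : b₁ + s ≤ a₂) (ρ : V) :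
    walkProb G ρ b₂ (fun w =>
        (walkRange w (Finset.Icc a₁ b₁) ∩ walkRange w (Finset.Icc a₂ b₂)).Nonempty) ≤
      4 * ((Finset.Icc a₁ b₁).card : ℝ) * ((Finset.Icc a₂ b₂).card : ℝ) /
        (Fintype.card V : ℝ) := by
  have : Nontrivial V := Fintype.one_lt_card_iff_nontrivial.mp hcard
  have hdeg : ∀ x, 0 < G.degree x := fun x => hconn.preconnected.degree_pos_of_nontrivial x
  calc _ ≤ ∑ p ∈ Finset.Icc a₁ b₁ ×ˢ Finset.Icc a₂ b₂, walkProb G ρ b₂ (fun w => w p.1 = w p.2) :=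
        walkProb_le_sum _ fun w => walkRange_inter_nonempty_iff.mp
    _ ≤ ∑ _p ∈ Finset.Icc a₁ b₁ ×ˢ Finset.Icc a₂ b₂, (4 / Fintype.card V : ℝ) :=
        Finset.sum_le_sum fun p hp => by
          simp only [Finset.mem_product, Finset.mem_Icc] at hp
          exact walkProb_apply_eq_apply_le hconn hreg hdeg (by omega) (by omega) hp.2.2 ρ
    _ = _ := by
        rw [Finset.sum_const, Finset.card_product, nsmul_eq_mul]
        push_cast
        ring

/-- Range self-intersection probability, two intervals. -/
theorem range_self_intersection_two_intervals
    (G : SimpleGraph V) [DecidableRel G.Adj] (hconn : G.Connected)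
    (hcard : 2 ≤ Fintype.card V) (d : ℕ) (hreg : G.IsRegularOfDegree d)
    (s : ℕ) (hs : tmix G + 1 ≤ s)
    (a₁ b₁ a₂ b₂ : ℕ) (h₁ : a₁ ≤ b₁) (h₂ : a₂ ≤ b₂)
    (ha₁ : s ≤ a₁) (hsep : b₁ + s ≤ a₂) (ρ : V) :
    walkProb G ρ b₂ (fun w =>
        (walkRange w (Finset.Icc a₁ b₁) ∩ walkRange w (Finset.Icc a₂ b₂)).Nonempty) ≤
      4 * ((Finset.Icc a₁ b₁).card : ℝ) * ((Finset.Icc a₂ b₂).card : ℝ) /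
        (Fintype.card V : ℝ) :=
  range_self_intersection_two_intervals_general G hconn hcard d hreg s hs a₁ b₁ a₂ b₂ ha₁ hsep ρ
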